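/- arXiv:1704.00772 — 5 statements merged into one kernel-verified Lean document; each statement's English description precedes it below -/
import Mathlib

section
/- If A is an algebra obtained by the Cayley-Dickson process over a field K of characteristic not 2 and the sublevel of A equals 1 (i.e., 0 is a sum of two nonzero squares in A), then the level of A is at most 2. -/
/-!
Write `x = re x • 1 + im x`, where `im x` lies in the span of the pairwise anticommuting
generators `fᵢ`; then `(im x)²` is a scalar, so `x² = (re x)² + (im x)² + 2 re x • im x`.
Comparing the scalar and the pure parts of `a² + b² = 0` gives
`(re a)² + (im a)² + (re b)² + (im b)² = 0` and `re a • im a + re b • im b = 0`.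

If `re a ≠ 0`, then `im a` is a multiple of `im b` and the scalar relation factors as
`((re a)² + (re b)²) ((re a)² + (im b)²) = 0`, so `-1` is already a square.
If `a` and `b` are both pure, then `a² = λ` and `b² = -λ` with `λ ≠ 0`, and
`-1 = (((1 - λ⁻¹) / 2) a)² + (((1 + λ⁻¹) / 2) b)²`.
-/

/-- An algebra `A` of dimension `2 ^ t` over a field `K` obtained by the Cayley-Dickson
process: it has a basis `{1, f₂, …, f_q}`, `q = 2 ^ t` (indexed here by
`Option (Fin (2 ^ t - 1))`, with `none` corresponding to the unit `1`), such that
`fᵢ² = αᵢ • 1` for nonzero scalars `αᵢ` and `fᵢ fⱼ = -fⱼ fᵢ` for `i ≠ j`.  The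
multiplication is not assumed associative, but is `K`-bilinear. -/
structure CayleyDickson (K : Type) [Field K] (A : Type) [NonAssocRing A] [Module K A]
    (t : ℕ) : Type where
  smul_mul : ∀ (c : K) (x y : A), (c • x) * y = c • (x * y)
  mul_smul : ∀ (c : K) (x y : A), x * (c • y) = c • (x * y)
  b : Module.Basis (Option (Fin (2 ^ t - 1))) K A
  bOne : b none = 1
  α : Fin (2 ^ t - 1) → K
  α_ne_zero : ∀ i, α i ≠ 0
  sq : ∀ i, b (some i) * b (some i) = α i • (1 : A)
  anticomm : ∀ i j, i ≠ j → b (some i) * b (some j) = -(b (some j) * b (some i))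

theorem Finset.sum_mul_sum_self_of_anticomm {R ι : Type*} [NonUnitalNonAssocRing R]
    (s : Finset ι) (f : ι → R) (hf : (s : Set ι).Pairwise fun i j => f i * f j + f j * f i = 0) :
    (∑ i ∈ s, f i) * (∑ i ∈ s, f i) = ∑ i ∈ s, f i * f i := by
  induction s using Finset.cons_induction with
  | empty => simp
  | cons a s ha ih =>
    have hcross : f a * ∑ i ∈ s, f i + (∑ i ∈ s, f i) * f a = 0 := by
      rw [Finset.mul_sum, Finset.sum_mul, ← Finset.sum_add_distrib]
      refine Finset.sum_eq_zero fun i hi => hf (by simp) (by simp [hi]) ?_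
      rintro rfl
      exact ha hi
    rw [Finset.sum_cons, Finset.sum_cons, ← ih (hf.mono (by simp)), add_mul, mul_add, mul_add,
      ← add_assoc, add_assoc (f a * f a), hcross, add_zero]

section ScalarTower

variable {K A : Type} [Field K] [NonAssocRing A] [Module K A] [IsScalarTower K A A]
  [SMulCommClass K A A]

theorem inv_smul_mul_self_eq_neg_one {e : K} (he : e ≠ 0) {z : A}
    (hz : z * z = -(e * e) • (1 : A)) : (e⁻¹ • z) * (e⁻¹ • z) = -1 := by
  rw [smul_mul_smul_comm, hz, smul_smul]
  field_simp
  simp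

theorem exists_add_mul_self_eq_neg_one (h2 : (2 : K) ≠ 0) {p : K} (hp : p ≠ 0) {v w : A}
    (hv : v * v = p • (1 : A)) (hw : w * w = -p • (1 : A)) :
    ∃ x y : A, x * x + y * y = -1 := by
  refine ⟨((1 - p⁻¹) / 2) • v, ((1 + p⁻¹) / 2) • w, ?_⟩
  rw [smul_mul_smul_comm, smul_mul_smul_comm, hv, hw, smul_smul, smul_smul, ← add_smul]
  have : (1 - p⁻¹) / 2 * ((1 - p⁻¹) / 2) * p + (1 + p⁻¹) / 2 * ((1 + p⁻¹) / 2) * -p = -1 := by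
    field_simp
    ring
  rw [this, neg_one_smul]

end ScalarTower

namespace CayleyDickson

variable {K A : Type} [Field K] [NonAssocRing A] [Module K A] {t : ℕ}

theorem isScalarTower (CD : CayleyDickson K A t) : IsScalarTower K A A :=
  ⟨CD.smul_mul⟩

theorem smulCommClass (CD : CayleyDickson K A t) : SMulCommClass K A A :=
  ⟨fun c x y => (CD.mul_smul c x y).symm⟩

variable (CD : CayleyDickson K A t)

noncomputable def re : A →ₗ[K] K :=
  CD.b.coord none

noncomputable def im : A →ₗ[K] A :=
  LinearMap.id - CD.re.smulRight 1

theorem re_one : CD.re 1 = 1 := by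
  simp [re, ← CD.bOne]

theorem im_apply (x : A) : CD.im x = x - CD.re x • 1 := rfl

theorem re_smul_one_add_im (x : A) : CD.re x • 1 + CD.im x = x := by
  rw [im_apply, add_sub_cancel]

theorem re_im (x : A) : CD.re (CD.im x) = 0 := by
  rw [im_apply, map_sub, map_smul, re_one, smul_eq_mul, mul_one, sub_self]

theorem im_one : CD.im 1 = 0 := by
  rw [im_apply, re_one, one_smul, sub_self]

theorem im_im (x : A) : CD.im (CD.im x) = CD.im x := by
  rw [CD.im_apply (CD.im x), re_im, zero_smul, sub_zero]

theorem eq_sum_of_re_eq_zero {v : A} (hv : CD.re v = 0) :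
    v = ∑ i, CD.b.repr v (some i) • CD.b (some i) := by
  conv_lhs => rw [← CD.b.sum_repr v]
  have hv' : CD.b.repr v none = 0 := hv
  rw [Fintype.sum_option, hv', zero_smul, zero_add]

variable [IsScalarTower K A A] [SMulCommClass K A A]

theorem mul_self_sum_smul_basis (c : Fin (2 ^ t - 1) → K) :
    (∑ i, c i • CD.b (some i)) * (∑ i, c i • CD.b (some i))
      = (∑ i, c i * c i * CD.α i) • (1 : A) := by
  rw [Finset.sum_mul_sum_self_of_anticomm, Finset.sum_smul]
  · simp_rw [smul_mul_smul_comm, CD.sq, smul_smul]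
  · intro i _ j _ hij
    rw [smul_mul_smul_comm, smul_mul_smul_comm, CD.anticomm i j hij, mul_comm (c j),
      smul_neg, neg_add_cancel]

theorem mul_self_of_re_eq_zero {v : A} (hv : CD.re v = 0) : v * v = CD.re (v * v) • 1 := by
  rw [CD.eq_sum_of_re_eq_zero hv, mul_self_sum_smul_basis, map_smul, re_one, smul_eq_mul,
    mul_one]

theorem mul_self_eq (x : A) :
    x * x = (CD.re x * CD.re x + CD.re (CD.im x * CD.im x)) • 1 + (2 * CD.re x) • CD.im x := by
  have him := CD.mul_self_of_re_eq_zero (CD.re_im x)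
  conv_lhs =>
    rw [← CD.re_smul_one_add_im x, add_mul, mul_add, mul_add, smul_mul_smul_comm, one_mul,
      smul_mul_assoc, one_mul, mul_smul_comm, mul_one, him]
  module

theorem re_mul_self (x : A) :
    CD.re (x * x) = CD.re x * CD.re x + CD.re (CD.im x * CD.im x) := by
  rw [CD.mul_self_eq x, map_add, map_smul, map_smul, re_one, re_im, smul_zero, add_zero,
    smul_eq_mul, mul_one]

theorem im_mul_self (x : A) : CD.im (x * x) = (2 * CD.re x) • CD.im x := by
  rw [CD.mul_self_eq x, map_add, map_smul, map_smul, im_one, im_im, smul_zero, zero_add]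

theorem exists_mul_self_eq_neg_one_of_re_ne_zero (h2 : (2 : K) ≠ 0) {a b : A}
    (hab : a * a + b * b = 0) (ha : CD.re a ≠ 0) : ∃ x : A, x * x = -1 := by
  set s := CD.re a
  set u := CD.re b
  set w := CD.im b
  have hre : s * s + CD.re (CD.im a * CD.im a) + (u * u + CD.re (w * w)) = 0 := by
    have h := congrArg CD.re hab
    rwa [map_add, CD.re_mul_self a, CD.re_mul_self b, map_zero] at h
  have him : CD.im a = -(u / s) • w := by
    have h := congrArg CD.im hab
    rw [map_add, im_mul_self, im_mul_self, map_zero, ← smul_smul, ← smul_smul,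
      ← smul_add, smul_eq_zero, or_iff_right h2] at h
    rw [← inv_smul_smul₀ ha (CD.im a), eq_neg_of_add_eq_zero_left h, smul_neg, smul_smul,
      neg_smul, div_eq_inv_mul]
  have hPa : CD.re (CD.im a * CD.im a) = u / s * (u / s) * CD.re (w * w) := by
    rw [him, smul_mul_smul_comm, map_smul, smul_eq_mul, neg_mul_neg]
  have key : (s * s + u * u) * (s * s + CD.re (w * w)) = 0 := by
    have : (s * s + u * u) * (s * s + CD.re (w * w))
        = s * s * (s * s + CD.re (CD.im a * CD.im a) + (u * u + CD.re (w * w))) := by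
      rw [hPa]
      field_simp
      ring
    rw [this, hre, mul_zero]
  rcases mul_eq_zero.1 key with h | h
  · refine ⟨s⁻¹ • u • 1, inv_smul_mul_self_eq_neg_one ha ?_⟩
    rw [smul_mul_smul_comm, one_mul, eq_neg_of_add_eq_zero_right h]
  · refine ⟨s⁻¹ • w, inv_smul_mul_self_eq_neg_one ha ?_⟩
    rw [CD.mul_self_of_re_eq_zero (CD.re_im b), eq_neg_of_add_eq_zero_right h]

theorem exists_add_mul_self_eq_neg_one_of_re_eq_zero (h2 : (2 : K) ≠ 0) {a b : A}
    (hab : a * a + b * b = 0) (ha : a * a ≠ 0) (hra : CD.re a = 0) (hrb : CD.re b = 0) :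
    ∃ x y : A, x * x + y * y = -1 := by
  have hva := CD.mul_self_of_re_eq_zero hra
  have hvb := CD.mul_self_of_re_eq_zero hrb
  have hp : CD.re (a * a) ≠ 0 := fun h => ha (by rw [hva, h, zero_smul])
  have hq : CD.re (b * b) = -CD.re (a * a) :=
    eq_neg_of_add_eq_zero_right (by rw [← map_add, hab, map_zero])
  exact exists_add_mul_self_eq_neg_one h2 hp hva (hq ▸ hvb)

end CayleyDickson

/-- If `A` is an algebra obtained by the Cayley-Dickson process over a field
`K` of characteristic not 2 and the sublevel of `A` equals 1 (i.e. `0` is a sum of two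
nonzero squares in `A`), then the level of `A` is at most 2. -/
theorem level_le_two_of_sublevel_eq_one (K A : Type) [Field K] [NonAssocRing A]
    [Module K A] (t : ℕ) (hchar : (2 : K) ≠ 0) (CD : CayleyDickson K A t)
    (h : ∃ a b : A, a * a ≠ 0 ∧ b * b ≠ 0 ∧ a * a + b * b = 0) :
    ∃ x y : A, x * x + y * y = -1 := by
  have := CD.isScalarTower
  have := CD.smulCommClass
  obtain ⟨a, b, ha, -, hab⟩ := h
  by_cases hra : CD.re a = 0
  · by_cases hrb : CD.re b = 0
    · exact CD.exists_add_mul_self_eq_neg_one_of_re_eq_zero hchar hab ha hra hrb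
    · obtain ⟨x, hx⟩ :=
        CD.exists_mul_self_eq_neg_one_of_re_ne_zero hchar ((add_comm _ _).trans hab) hrb
      exact ⟨x, 0, by rw [hx, mul_zero, add_zero]⟩
  · obtain ⟨x, hx⟩ := CD.exists_mul_self_eq_neg_one_of_re_ne_zero hchar hab hra
    exact ⟨x, 0, by rw [hx, mul_zero, add_zero]⟩
end

section
/- Let A be an algebra over a field K (char K ≠ 2) obtained by the Cayley-Dickson process, with trace form T_C and pure trace form T_P. If the quadratic form <1> ⊥ (n × T_P) is isotropic over K for some positive integer n, then the level of A satisfies s(A) ≤ n. -/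
/-! A pure element `∑ cᵢ fᵢ` is a sum of pairwise anticommuting terms, so it squares to the
scalar `T_P(c)`; hence `-1` is a sum of `n` squares in `A` as soon as `n × T_P` represents `-1`.
An isotropic vector `(x, y)` of `<1> ⊥ n × T_P` gives the representation `y / x` if `x ≠ 0`.
If `x = 0`, then `y` is an isotropic vector of the diagonal form `n × T_P`, which has nonzero
coefficients; pairing `y` with a suitable coordinate vector `e` spans a hyperbolic plane, and
`Q(a y + e) = a · polar(y, e) + Q(e)` takes every value. -/

open Finset QuadraticMap

theorem Finset.sum_mul_sum_self_of_pairwise_anticomm {ι R : Type*} [DecidableEq ι]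
    [NonUnitalNonAssocRing R] (s : Finset ι) {e : ι → R}
    (he : Pairwise fun i j => e i * e j = -(e j * e i)) :
    (∑ i ∈ s, e i) * (∑ i ∈ s, e i) = ∑ i ∈ s, e i * e i := by
  induction s using Finset.induction_on with
  | empty => simp
  | insert a s ha ih =>
    have cross : e a * ∑ i ∈ s, e i + (∑ i ∈ s, e i) * e a = 0 := by
      rw [mul_sum, sum_mul, ← sum_add_distrib]
      refine sum_eq_zero fun j hj => ?_
      rw [he (ne_of_mem_of_not_mem hj ha).symm, neg_add_cancel]
    rw [sum_insert ha, sum_insert ha, ← ih]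
    calc (e a + ∑ i ∈ s, e i) * (e a + ∑ i ∈ s, e i)
        = e a * e a + (e a * ∑ i ∈ s, e i + (∑ i ∈ s, e i) * e a)
          + (∑ i ∈ s, e i) * (∑ i ∈ s, e i) := by noncomm_ring
      _ = _ := by rw [cross, add_zero]

namespace QuadraticMap

variable {K V : Type*} [Field K] [AddCommGroup V] [Module K V]

theorem exists_eq_of_polar_ne_zero (Q : QuadraticForm K V) {v e : V} (hv : Q v = 0)
    (hve : polar Q v e ≠ 0) (c : K) : ∃ u, Q u = c := by
  refine ⟨((c - Q e) / polar Q v e) • v + e, ?_⟩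
  rw [QuadraticMap.map_add Q, QuadraticMap.map_smul, polar_smul_left, hv, smul_eq_mul,
    smul_eq_mul, div_mul_cancel₀ _ hve]
  ring

theorem polar_weightedSumSquares_single {ι R : Type*} [Fintype ι] [DecidableEq ι] [CommRing R]
    (w v : ι → R) (j : ι) :
    polar (weightedSumSquares R w) v (Pi.single j 1) = 2 * w j * v j := by
  simp only [polar, weightedSumSquares_apply, smul_eq_mul, ← Finset.sum_sub_distrib]
  rw [Finset.sum_eq_single j]
  · simp; ring
  · intro i _ hij; simp [hij]
  · simp

end QuadraticMap

section DiagonalForms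

variable {ι K : Type*} [Fintype ι] [DecidableEq ι] [Field K]

theorem exists_weightedSumSquares_eq_of_isotropic (h2 : (2 : K) ≠ 0) {w : ι → K}
    (hw : ∀ j, w j ≠ 0) {v : ι → K} (hv0 : v ≠ 0) (hv : weightedSumSquares K w v = 0)
    (c : K) :
    ∃ u, weightedSumSquares K w u = c := by
  obtain ⟨j, hj⟩ := Function.ne_iff.mp hv0
  refine exists_eq_of_polar_ne_zero _ hv (e := Pi.single j 1) ?_ c
  rw [polar_weightedSumSquares_single]
  exact mul_ne_zero (mul_ne_zero h2 (hw j)) hj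

theorem exists_weightedSumSquares_eq_neg_one_of_sq_add_eq_zero (h2 : (2 : K) ≠ 0) {w : ι → K}
    (hw : ∀ j, w j ≠ 0) {x : K} {y : ι → K} (hxy : x ≠ 0 ∨ y ≠ 0)
    (h : x ^ 2 + weightedSumSquares K w y = 0) : ∃ u, weightedSumSquares K w u = -1 := by
  by_cases hx : x = 0
  · subst hx
    exact exists_weightedSumSquares_eq_of_isotropic h2 hw (hxy.resolve_left (not_not_intro rfl))
      (by simpa using h) (-1)
  · refine ⟨x⁻¹ • y, ?_⟩
    rw [QuadraticMap.map_smul, smul_eq_mul, eq_neg_of_add_eq_zero_right h]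
    field_simp

end DiagonalForms

theorem weightedSumSquares_prod_snd {ι κ R : Type*} [Fintype ι] [Fintype κ] [CommSemiring R]
    (w : κ → R) (u : ι × κ → R) :
    weightedSumSquares R (fun p : ι × κ => w p.2) u
      = ∑ i, weightedSumSquares R w (fun j => u (i, j)) := by
  simp only [weightedSumSquares_apply, Fintype.sum_prod_type]

namespace CayleyDickson

variable {K A : Type} [Field K] [NonAssocRing A] [Module K A] {t : ℕ} (CD : CayleyDickson K A t)

theorem sum_smul_mul_self (c : Fin (2 ^ t - 1) → K) :
    (∑ i, c i • CD.b (some i)) * (∑ i, c i • CD.b (some i))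
      = weightedSumSquares K CD.α c • (1 : A) := by
  have smul_mul_smul : ∀ i j, (c i • CD.b (some i)) * (c j • CD.b (some j))
      = (c i * c j) • (CD.b (some i) * CD.b (some j)) := fun i j => by
    rw [CD.smul_mul, CD.mul_smul, smul_smul]
  have he : Pairwise fun i j => (c i • CD.b (some i)) * (c j • CD.b (some j))
      = -((c j • CD.b (some j)) * (c i • CD.b (some i))) := fun i j hij => by
    dsimp only
    rw [smul_mul_smul, smul_mul_smul, CD.anticomm i j hij, mul_comm, smul_neg]
  rw [sum_mul_sum_self_of_pairwise_anticomm _ he, weightedSumSquares_apply, sum_smul]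
  refine sum_congr rfl fun i _ => ?_
  rw [smul_mul_smul, CD.sq, smul_smul, smul_eq_mul, mul_comm]

end CayleyDickson

theorem level_le_of_isotropic_general (K A : Type) [Field K] [NonAssocRing A] [Module K A]
    (t : ℕ) (hchar : (2 : K) ≠ 0) (CD : CayleyDickson K A t) (n : ℕ)
    (hiso : ∃ (x : K) (y : Fin n → Fin (2 ^ t - 1) → K), (x ≠ 0 ∨ y ≠ 0) ∧
      x ^ 2 + ∑ m, ∑ i, CD.α i * y m i ^ 2 = 0) :
    ∃ f : Fin n → A, ∑ i, f i * f i = -1 := by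
  obtain ⟨x, y, hxy, hsum⟩ := hiso
  have hxy' : x ≠ 0 ∨ Function.uncurry y ≠ 0 :=
    hxy.imp_right fun hy h => hy (funext₂ fun m i => congr_fun h (m, i))
  have hsum' : x ^ 2 + weightedSumSquares K (fun p => CD.α p.2) (Function.uncurry y) = 0 := by
    rw [weightedSumSquares_prod_snd]
    simpa only [weightedSumSquares_apply, smul_eq_mul, Function.uncurry_apply_pair, _root_.sq]
      using hsum
  obtain ⟨u, hu⟩ :=
    exists_weightedSumSquares_eq_neg_one_of_sq_add_eq_zero hchar (fun p => CD.α_ne_zero p.2)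
      hxy' hsum'
  refine ⟨fun m => ∑ i, u (m, i) • CD.b (some i), ?_⟩
  rw [weightedSumSquares_prod_snd] at hu
  simp only [CD.sum_smul_mul_self, ← sum_smul, hu, neg_one_smul]

/-- If the quadratic form `<1> ⊥ (n × T_P)` (with `T_P = <α₂, …, α_q>` the
pure trace form of the Cayley-Dickson algebra `A`) is isotropic over `K` for a positive
integer `n`, then the level of `A` satisfies `s(A) ≤ n`, i.e. `-1` is a sum of `n`
squares in `A`. -/
theorem level_le_of_isotropic (K A : Type) [Field K] [NonAssocRing A] [Module K A]
    (t : ℕ) (hchar : (2 : K) ≠ 0) (CD : CayleyDickson K A t) (n : ℕ) (hn : 0 < n)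
    (hiso : ∃ (x : K) (y : Fin n → Fin (2 ^ t - 1) → K), (x ≠ 0 ∨ y ≠ 0) ∧
      x ^ 2 + ∑ m, ∑ i, CD.α i * y m i ^ 2 = 0) :
    ∃ f : Fin n → A, ∑ i, f i * f i = -1 :=
  level_le_of_isotropic_general K A t hchar CD n hiso
end

section
/- Let A be an algebra over a field K (char K ≠ 2) obtained by the Cayley-Dickson process with trace form T_C. If s(A) ≤ n, then -1 is represented over K by the quadratic form n × T_C. -/
/-!
Expanding `x = ∑ⱼ xⱼ fⱼ` bilinearly, the scalar part of `x²` is `∑ⱼ,ₖ xⱼ xₖ ⟨fⱼ fₖ⟩`, where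
`⟨fⱼ fₖ⟩` denotes the scalar part of `fⱼ fₖ`. Anticommutativity makes these coefficients
antisymmetric off the diagonal, so in characteristic `≠ 2` only the diagonal terms
`xⱼ² ⟨fⱼ²⟩ = αⱼ xⱼ²` survive: the scalar part of `x²` is `T_C(x)`. Taking scalar parts in
`∑ₘ fₘ² = -1` then represents `-1` by `n × T_C`.
-/

theorem Fintype.sum_sum_eq_sum_diag_of_antisymm {ι R : Type*} [Fintype ι] [Ring R]
    [NoZeroDivisors R] (h2 : (2 : R) ≠ 0) (g : ι → ι → R)
    (hg : ∀ j k, j ≠ k → g j k = -g k j) :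
    ∑ j, ∑ k, g j k = ∑ j, g j j := by
  refine mul_left_cancel₀ h2 ?_
  calc 2 * ∑ j, ∑ k, g j k = ∑ j, ∑ k, (g j k + g k j) := by
        rw [two_mul]
        nth_rw 2 [Finset.sum_comm]
        simp only [← Finset.sum_add_distrib]
    _ = ∑ j, (g j j + g j j) := by
        refine Finset.sum_congr rfl fun j _ => ?_
        refine Finset.sum_eq_single j (fun k _ hkj => ?_) (by simp)
        rw [hg j k (Ne.symm hkj), neg_add_cancel]
    _ = 2 * ∑ j, g j j := by
        simp only [Finset.mul_sum, two_mul]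

namespace CayleyDickson

variable {K A : Type} [Field K] [NonAssocRing A] [Module K A] {t : ℕ}
  (CD : CayleyDickson K A t)

/-- The trace form `T_C = <1, α₂, …, α_q>`. -/
def traceForm (v : K × (Fin (2 ^ t - 1) → K)) : K :=
  v.1 ^ 2 + ∑ i, CD.α i * v.2 i ^ 2

noncomputable def coords (x : A) : K × (Fin (2 ^ t - 1) → K) :=
  (CD.b.repr x none, fun i => CD.b.repr x (some i))

theorem coord_none_one : CD.b.coord none 1 = 1 := by
  rw [← CD.bOne, Module.Basis.coord_apply, Module.Basis.repr_self, Finsupp.single_eq_same]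

theorem coord_none_mul (x y : A) :
    CD.b.coord none (x * y) =
      ∑ j, ∑ k, CD.b.repr x j * CD.b.repr y k * CD.b.coord none (CD.b j * CD.b k) := by
  conv_lhs => rw [← CD.b.sum_repr x, ← CD.b.sum_repr y, Finset.sum_mul_sum]
  simp only [map_sum, CD.smul_mul, CD.mul_smul, map_smul, smul_eq_mul, mul_assoc]

theorem coord_none_basis_mul_basis_self (i : Fin (2 ^ t - 1)) :
    CD.b.coord none (CD.b (some i) * CD.b (some i)) = CD.α i := by
  rw [CD.sq i, map_smul, CD.coord_none_one, smul_eq_mul, mul_one]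

theorem coord_none_basis_mul_basis_antisymm {j k : Option (Fin (2 ^ t - 1))} (hjk : j ≠ k) :
    CD.b.coord none (CD.b j * CD.b k) = -CD.b.coord none (CD.b k * CD.b j) := by
  rcases j with _ | i <;> rcases k with _ | i'
  · exact absurd rfl hjk
  all_goals simp_all [CD.bOne, CD.anticomm]

theorem traceForm_coords (hchar : (2 : K) ≠ 0) (x : A) :
    CD.traceForm (CD.coords x) = CD.b.coord none (x * x) := by
  rw [CD.coord_none_mul, Fintype.sum_sum_eq_sum_diag_of_antisymm hchar _
    fun j k hjk => by rw [CD.coord_none_basis_mul_basis_antisymm hjk]; ring]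
  simp only [Fintype.sum_option, CD.bOne, one_mul, CD.coord_none_one,
    CD.coord_none_basis_mul_basis_self, traceForm, coords]
  congr 1
  · ring
  · exact Finset.sum_congr rfl fun i _ => by ring

end CayleyDickson

theorem neg_one_represented_by_trace_form_general (K A : Type) [Field K] [NonAssocRing A]
    [Module K A] (t : ℕ) (hchar : (2 : K) ≠ 0) (CD : CayleyDickson K A t) (n : ℕ)
    (h : ∃ f : Fin n → A, ∑ i, f i * f i = -1) :
    ∃ v : Fin n → K × (Fin (2 ^ t - 1) → K),
      ∑ m, ((v m).1 ^ 2 + ∑ i, CD.α i * (v m).2 i ^ 2) = -1 := by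
  obtain ⟨f, hf⟩ := h
  refine ⟨fun m => CD.coords (f m), ?_⟩
  calc ∑ m, CD.traceForm (CD.coords (f m)) = CD.b.coord none (∑ m, f m * f m) := by
        simp only [CD.traceForm_coords hchar, map_sum]
    _ = -1 := by rw [hf, map_neg, CD.coord_none_one]

/-- If the level of the Cayley-Dickson algebra `A` satisfies `s(A) ≤ n`
(i.e. `-1` is a sum of `n` squares in `A`), then `-1` is represented over `K` by the
quadratic form `n × T_C`, where `T_C = <1, α₂, …, α_q>` is the trace form. -/
theorem neg_one_represented_by_trace_form (K A : Type) [Field K] [NonAssocRing A]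
    [Module K A] (t : ℕ) (hchar : (2 : K) ≠ 0) (CD : CayleyDickson K A t) (n : ℕ)
    (hn : 0 < n) (h : ∃ f : Fin n → A, ∑ i, f i * f i = -1) :
    ∃ v : Fin n → K × (Fin (2 ^ t - 1) → K),
      ∑ m, ((v m).1 ^ 2 + ∑ i, CD.α i * (v m).2 i ^ 2) = -1 :=
  neg_one_represented_by_trace_form_general K A t hchar CD n h
end

section
/- Springer's theorem: Let φ₁ and φ₂ be quadratic forms over a field K (char K ≠ 2) and K(X) the rational function field. The form φ₁ ⊥ X·φ₂ is isotropic over K(X) if and only if φ₁ or φ₂ is isotropic over K. -/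
open Polynomial in
private lemma springer_key (K : Type) [Field K] :
    ∀ N m n (a : Fin m → K) (b : Fin n → K) (px : Fin m → K[X]) (py : Fin n → K[X]),
      ((∑ i, (px i).natDegree) + ∑ j, (py j).natDegree ≤ N) →
      (px ≠ 0 ∨ py ≠ 0) →
      (∑ i, Polynomial.C (a i) * px i ^ 2
        + Polynomial.X * ∑ j, Polynomial.C (b j) * py j ^ 2 = 0) →
      (∃ x : Fin m → K, x ≠ 0 ∧ ∑ i, a i * x i ^ 2 = 0) ∨
      (∃ y : Fin n → K, y ≠ 0 ∧ ∑ j, b j * y j ^ 2 = 0) := by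
  intro N
  induction N using Nat.strong_induction_on with
  | _ N IH =>
  intro m n a b px py hdeg hne heq
  -- evaluate at 0
  by_cases hx0 : (fun i => (px i).eval 0) = 0
  case neg =>
    left
    refine ⟨fun i => (px i).eval 0, hx0, ?_⟩
    have := congrArg (Polynomial.eval 0) heq
    simpa [Polynomial.eval_finset_sum] using this
  -- all px i have root 0
  have hdvd : ∀ i, ∃ q, px i = Polynomial.X * q := by
    intro i
    have : (px i).coeff 0 = 0 := by
      rw [coeff_zero_eq_eval_zero]; exact congrFun hx0 i
    exact X_dvd_iff.mpr this
  choose px' hpx' using hdvd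
  have e1 : ∑ i, Polynomial.C (a i) * px i ^ 2
      = Polynomial.X ^ 2 * ∑ i, Polynomial.C (a i) * px' i ^ 2 := by
    rw [Finset.mul_sum]
    refine Finset.sum_congr rfl fun i _ => ?_
    rw [hpx' i]; ring
  rw [e1] at heq
  have heq2 : ∑ j, Polynomial.C (b j) * py j ^ 2
      + Polynomial.X * ∑ i, Polynomial.C (a i) * px' i ^ 2 = 0 := by
    have h2 : Polynomial.X * (∑ j, Polynomial.C (b j) * py j ^ 2
        + Polynomial.X * ∑ i, Polynomial.C (a i) * px' i ^ 2) = 0 := by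
      linear_combination heq
    exact (mul_eq_zero.mp h2).resolve_left Polynomial.X_ne_zero
  by_cases hy0 : (fun j => (py j).eval 0) = 0
  case neg =>
    right
    refine ⟨fun j => (py j).eval 0, hy0, ?_⟩
    have := congrArg (Polynomial.eval 0) heq2
    simpa [Polynomial.eval_finset_sum] using this
  have hdvd' : ∀ j, ∃ q, py j = Polynomial.X * q := by
    intro j
    have : (py j).coeff 0 = 0 := by
      rw [coeff_zero_eq_eval_zero]; exact congrFun hy0 j
    exact X_dvd_iff.mpr this
  choose py' hpy' using hdvd'
  have e2 : ∑ j, Polynomial.C (b j) * py j ^ 2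
      = Polynomial.X ^ 2 * ∑ j, Polynomial.C (b j) * py' j ^ 2 := by
    rw [Finset.mul_sum]
    refine Finset.sum_congr rfl fun j _ => ?_
    rw [hpy' j]; ring
  rw [e2] at heq2
  have heq3 : ∑ i, Polynomial.C (a i) * px' i ^ 2
      + Polynomial.X * ∑ j, Polynomial.C (b j) * py' j ^ 2 = 0 := by
    have h2 : Polynomial.X * (∑ i, Polynomial.C (a i) * px' i ^ 2
        + Polynomial.X * ∑ j, Polynomial.C (b j) * py' j ^ 2) = 0 := by
      linear_combination heq2
    exact (mul_eq_zero.mp h2).resolve_left Polynomial.X_ne_zero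
  -- degree facts
  have hle1 : ∀ i, (px' i).natDegree ≤ (px i).natDegree := by
    intro i
    by_cases h : px' i = 0
    · simp [h]
    · rw [hpx' i, natDegree_mul Polynomial.X_ne_zero h, natDegree_X]; omega
  have hle2 : ∀ j, (py' j).natDegree ≤ (py j).natDegree := by
    intro j
    by_cases h : py' j = 0
    · simp [h]
    · rw [hpy' j, natDegree_mul Polynomial.X_ne_zero h, natDegree_X]; omega
  have hne' : px' ≠ 0 ∨ py' ≠ 0 := by
    rcases hne with h | h
    · left
      intro h0
      apply h; funext i
      have : px' i = 0 := congrFun h0 i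
      rw [hpx' i, this, mul_zero]; rfl
    · right
      intro h0
      apply h; funext j
      have : py' j = 0 := congrFun h0 j
      rw [hpy' j, this, mul_zero]; rfl
  -- strict decrease of measure
  have hlt : (∑ i, (px' i).natDegree) + ∑ j, (py' j).natDegree
      < (∑ i, (px i).natDegree) + ∑ j, (py j).natDegree := by
    rcases hne with h | h
    · have : ∃ i, px i ≠ 0 := by
        by_contra h0; push_neg at h0; exact h (funext fun i => h0 i)
      obtain ⟨i0, hi0⟩ := this
      have hi0' : px' i0 ≠ 0 := by
        intro h0; apply hi0; rw [hpx' i0, h0, mul_zero]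
      have hstrict : (px' i0).natDegree < (px i0).natDegree := by
        rw [hpx' i0, natDegree_mul Polynomial.X_ne_zero hi0', natDegree_X]; omega
      have h1 : ∑ i, (px' i).natDegree < ∑ i, (px i).natDegree :=
        Finset.sum_lt_sum (fun i _ => hle1 i) ⟨i0, Finset.mem_univ i0, hstrict⟩
      have h2 : ∑ j, (py' j).natDegree ≤ ∑ j, (py j).natDegree :=
        Finset.sum_le_sum (fun j _ => hle2 j)
      omega
    · have : ∃ j, py j ≠ 0 := by
        by_contra h0; push_neg at h0; exact h (funext fun j => h0 j)
      obtain ⟨j0, hj0⟩ := this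
      have hj0' : py' j0 ≠ 0 := by
        intro h0; apply hj0; rw [hpy' j0, h0, mul_zero]
      have hstrict : (py' j0).natDegree < (py j0).natDegree := by
        rw [hpy' j0, natDegree_mul Polynomial.X_ne_zero hj0', natDegree_X]; omega
      have h1 : ∑ j, (py' j).natDegree < ∑ j, (py j).natDegree :=
        Finset.sum_lt_sum (fun j _ => hle2 j) ⟨j0, Finset.mem_univ j0, hstrict⟩
      have h2 : ∑ i, (px' i).natDegree ≤ ∑ i, (px i).natDegree :=
        Finset.sum_le_sum (fun i _ => hle1 i)
      omega
  exact IH ((∑ i, (px' i).natDegree) + ∑ j, (py' j).natDegree) (by omega)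
    m n a b px' py' le_rfl hne' heq3

/-- Springer's theorem: Let `φ₁ = <a₁, …, a_m>` and `φ₂ = <b₁, …, b_n>` be
(regular, diagonalized) quadratic forms over a field `K` of characteristic not 2 and let
`K(X)` be the rational function field.  The form `φ₁ ⊥ X·φ₂` is isotropic over `K(X)` if
and only if `φ₁` or `φ₂` is isotropic over `K`. -/
theorem springer (K : Type) [Field K] (hchar : (2 : K) ≠ 0) (m n : ℕ)
    (a : Fin m → K) (b : Fin n → K) (ha : ∀ i, a i ≠ 0) (hb : ∀ j, b j ≠ 0) :
    (∃ (x : Fin m → RatFunc K) (y : Fin n → RatFunc K), (x ≠ 0 ∨ y ≠ 0) ∧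
        ∑ i, RatFunc.C (a i) * x i ^ 2 + RatFunc.X * ∑ j, RatFunc.C (b j) * y j ^ 2 = 0) ↔
      (∃ x : Fin m → K, x ≠ 0 ∧ ∑ i, a i * x i ^ 2 = 0) ∨
      (∃ y : Fin n → K, y ≠ 0 ∧ ∑ j, b j * y j ^ 2 = 0) := by
  constructor
  · rintro ⟨x, y, hne, heq⟩
    -- clear denominators
    obtain ⟨c, hc⟩ := IsLocalization.exist_integer_multiples
      (nonZeroDivisors (Polynomial K)) Finset.univ (Sum.elim x y : Fin m ⊕ Fin n → RatFunc K)
    set φ := algebraMap (Polynomial K) (RatFunc K) with hφ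
    have hφinj : Function.Injective φ := RatFunc.algebraMap_injective K
    have hcx : ∀ i : Fin m, ∃ p : Polynomial K, φ p = φ (c : Polynomial K) * x i := by
      intro i
      obtain ⟨p, hp⟩ := hc (Sum.inl i) (Finset.mem_univ _)
      exact ⟨p, by simpa [Algebra.smul_def] using hp⟩
    have hcy : ∀ j : Fin n, ∃ p : Polynomial K, φ p = φ (c : Polynomial K) * y j := by
      intro j
      obtain ⟨p, hp⟩ := hc (Sum.inr j) (Finset.mem_univ _)
      exact ⟨p, by simpa [Algebra.smul_def] using hp⟩
    choose px hpx using hcx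
    choose py hpy using hcy
    have hc0 : (c : Polynomial K) ≠ 0 := nonZeroDivisors.coe_ne_zero c
    have hd0 : φ (c : Polynomial K) ≠ 0 := fun h => hc0 (hφinj (by simpa using h))
    -- the polynomial identity
    have hP : ∑ i, Polynomial.C (a i) * px i ^ 2
        + Polynomial.X * ∑ j, Polynomial.C (b j) * py j ^ 2 = 0 := by
      apply hφinj
      rw [map_zero, map_add, map_mul, map_sum, map_sum]
      have h1 : ∀ i, φ (Polynomial.C (a i) * px i ^ 2)
          = φ (c : Polynomial K) ^ 2 * (RatFunc.C (a i) * x i ^ 2) := by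
        intro i
        rw [map_mul, map_pow, hpx i, RatFunc.algebraMap_C]; ring
      have h2 : ∀ j, φ (Polynomial.C (b j) * py j ^ 2)
          = φ (c : Polynomial K) ^ 2 * (RatFunc.C (b j) * y j ^ 2) := by
        intro j
        rw [map_mul, map_pow, hpy j, RatFunc.algebraMap_C]; ring
      rw [Finset.sum_congr rfl (fun i _ => h1 i), Finset.sum_congr rfl (fun j _ => h2 j),
        ← Finset.mul_sum, ← Finset.mul_sum, RatFunc.algebraMap_X]
      linear_combination φ (c : Polynomial K) ^ 2 * heq
    have hpne : px ≠ 0 ∨ py ≠ 0 := by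
      rcases hne with h | h
      · left
        intro h0
        apply h; funext i
        have hpi : px i = 0 := congrFun h0 i
        have : φ (c : Polynomial K) * x i = 0 := by
          rw [← hpx i, hpi, map_zero]
        rcases mul_eq_zero.mp this with h' | h'
        · exact absurd h' hd0
        · exact h'
      · right
        intro h0
        apply h; funext j
        have hpj : py j = 0 := congrFun h0 j
        have : φ (c : Polynomial K) * y j = 0 := by
          rw [← hpy j, hpj, map_zero]
        rcases mul_eq_zero.mp this with h' | h'
        · exact absurd h' hd0
        · exact h'
    exact springer_key K ((∑ i, (px i).natDegree) + ∑ j, (py j).natDegree)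
      m n a b px py le_rfl hpne hP
  · rintro (⟨x, hx, hsum⟩ | ⟨y, hy, hsum⟩)
    · refine ⟨fun i => RatFunc.C (x i), 0, Or.inl ?_, ?_⟩
      · intro h0
        apply hx; funext i
        have h1 : RatFunc.C (x i) = 0 := by simpa using congrFun h0 i
        exact (map_eq_zero_iff (RatFunc.C (K := K)) (RingHom.injective _)).mp h1
      · simp only [Pi.zero_apply, ne_eq]
        have : ∑ i, RatFunc.C (a i) * RatFunc.C (x i) ^ 2 = RatFunc.C (∑ i, a i * x i ^ 2) := by
          rw [map_sum]
          exact Finset.sum_congr rfl fun i _ => by rw [map_mul, map_pow]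
        simp [this, hsum]
    · refine ⟨0, fun j => RatFunc.C (y j), Or.inr ?_, ?_⟩
      · intro h0
        apply hy; funext j
        have := congrFun h0 j
        simpa using this
      · have : ∑ j, RatFunc.C (b j) * RatFunc.C (y j) ^ 2 = RatFunc.C (∑ j, b j * y j ^ 2) := by
          rw [map_sum]
          exact Finset.sum_congr rfl fun j _ => by rw [map_mul, map_pow]
        simp [this, hsum]
end

section
/- Let T_P = <X₁, X₂, -X₁X₂, X₃, ..., (-1)^{t+1}X₁···X_t> be the pure trace form of the Cayley-Dickson algebra A_t over K = K₀(X₁,...,X_t), with K₀ formally real and t ≥ 2. Then for every positive integer n, both n × T_P and <1> ⊥ n × T_P are anisotropic over K. -/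
/-
Over `K₀[X₁, …, X_t]` the form `<1> ⊥ n × T_P` is an orthogonal sum `⊥_S X^S φ_S`, where
`X^S = ∏_{i ∈ S} Xᵢ` and each `φ_S` is `±` a sum of squares over `K₀`. Springer's theorem for
`R[X]` (an isotropic vector of `φ₀ ⊥ X φ₁` is `X` times another one, by looking at constant terms)
reduces anisotropy over `R[X]` to anisotropy of `φ₀` and `φ₁` over `R`; peeling off the variables
one at a time leaves the forms `φ_S`, which are anisotropic because `K₀` is formally real.
Clearing denominators passes from the polynomial ring to its fraction field `K`.
-/

/-- The images of the indeterminates `Xᵢ` in the rational function field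
`K = K₀(X₁, …, X_t)`. -/
noncomputable def xi (K₀ : Type) [Field K₀] (t : ℕ) (i : Fin t) :
    FractionRing (MvPolynomial (Fin t) K₀) :=
  algebraMap (MvPolynomial (Fin t) K₀) (FractionRing (MvPolynomial (Fin t) K₀))
    (MvPolynomial.X i)

/-- The diagonal coefficients of the pure trace form
`T_P = <X₁, X₂, -X₁X₂, X₃, …, (-1)^{t+1} X₁⋯X_t>` of the Cayley-Dickson algebra `A_t`
over `K = K₀(X₁, …, X_t)`: the coefficient attached to a nonempty subset
`S ⊆ {1, …, t}` is `(-1)^{|S| + 1} ∏_{i ∈ S} Xᵢ`. -/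
noncomputable def pureTraceCoeff (K₀ : Type) [Field K₀] (t : ℕ)
    (S : {S : Finset (Fin t) // S.Nonempty}) :
    FractionRing (MvPolynomial (Fin t) K₀) :=
  (-1) ^ (S.1.card + 1) * ∏ i ∈ S.1, xi K₀ t i

section DiagAnisotropic

variable {A B ι : Type*} [CommRing A] [CommRing B] [Fintype ι]

/-- Anisotropy of `∑ cᵢ xᵢ²` on vectors supported in `s`, so that subforms need no
reindexing. -/
def DiagAnisotropicOn (c : ι → A) (s : Set ι) : Prop :=
  ∀ x : ι → A, Function.support x ⊆ s → ∑ i, c i * x i ^ 2 = 0 → x = 0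

theorem DiagAnisotropicOn.mono {c : ι → A} {s t : Set ι} (h : DiagAnisotropicOn c s)
    (hts : t ⊆ s) : DiagAnisotropicOn c t :=
  fun x hx => h x (hx.trans hts)

theorem DiagAnisotropicOn.of_map {F : Type*} [FunLike F A B] [RingHomClass F A B] {f : F}
    (hf : Function.Injective f) {c : ι → A} {s : Set ι}
    (h : DiagAnisotropicOn (fun i => f (c i)) s) : DiagAnisotropicOn c s := by
  intro x hx hsum
  have hfx : (fun i => f (x i)) = 0 := by
    refine h _ (fun i hi => hx fun hxi => hi (by simp [hxi])) ?_
    simpa using congrArg f hsum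
  funext i
  exact hf (by simpa using congrFun hfx i)

end DiagAnisotropic

section Springer

open Polynomial

variable {A ι : Type*} [CommRing A] [Fintype ι] {c : ι → A} {s p : Set ι} [DecidablePred (· ∈ p)]

theorem exists_isotropic_compl (hc : DiagAnisotropicOn c (s \ p)) {f : ι → A[X]}
    (hf : Function.support f ⊆ s) (hiso : ∑ i, (if i ∈ p then X else 1) * C (c i) * f i ^ 2 = 0) :
    ∃ g : ι → A[X], Function.support g ⊆ s ∧
      ∑ i, (if i ∈ pᶜ then X else 1) * C (c i) * g i ^ 2 = 0 ∧
      ∀ i, f i = if i ∈ p then g i else X * g i := by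
  -- At `X = 0` only the `φ₀`-part survives, so the constant terms are isotropic for `φ₀`.
  have hcoeff : ∀ i, i ∉ p → (f i).coeff 0 = 0 := by
    have := hc (fun i => if i ∈ p then 0 else (f i).coeff 0) ?_ ?_
    · intro i hi
      simpa [hi] using congrFun this i
    · intro i hi
      by_cases hp : i ∈ p
      · simp [hp] at hi
      · exact ⟨hf fun hfi => hi (by simp [hp, hfi]), hp⟩
    · simpa [apply_ite, sq, mul_coeff_zero] using congrArg constantCoeff hiso
  have hf_eq : ∀ i, i ∉ p → f i = X * divX (f i) := fun i hp => by
    simpa [hcoeff i hp] using (X_mul_divX_add (f i)).symm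
  refine ⟨fun i => if i ∈ p then f i else divX (f i), ?_, ?_, fun i => ?_⟩
  · intro i hi
    refine hf fun hfi => hi ?_
    simp [hfi]
  · have hsplit : ∑ i, (if i ∈ p then X else 1) * C (c i) * f i ^ 2 =
        X * ∑ i, (if i ∈ pᶜ then X else 1) * C (c i) *
          (if i ∈ p then f i else divX (f i)) ^ 2 := by
      rw [Finset.mul_sum]
      refine Finset.sum_congr rfl fun i _ => ?_
      by_cases hp : i ∈ p
      · simp [hp]
        ring
      · conv_lhs => rw [hf_eq i hp]
        simp [hp]
        ring
    rwa [hsplit, monic_X.mul_right_eq_zero_iff] at hiso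
  · by_cases hp : i ∈ p
    · simp [hp]
    · simpa [hp] using hf_eq i hp

theorem exists_isotropic_X_mul (hc₀ : DiagAnisotropicOn c (s \ p))
    (hc₁ : DiagAnisotropicOn c (s ∩ p)) {f : ι → A[X]} (hf : Function.support f ⊆ s)
    (hiso : ∑ i, (if i ∈ p then X else 1) * C (c i) * f i ^ 2 = 0) :
    ∃ h : ι → A[X], Function.support h ⊆ s ∧
      ∑ i, (if i ∈ p then X else 1) * C (c i) * h i ^ 2 = 0 ∧ ∀ i, f i = X * h i := by
  obtain ⟨g, hg, hgiso, hfg⟩ := exists_isotropic_compl hc₀ hf hiso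
  obtain ⟨h, hh, hhiso, hgh⟩ :=
    exists_isotropic_compl (p := pᶜ) (by rwa [Set.sdiff_compl]) hg hgiso
  refine ⟨h, hh, by simpa using hhiso, fun i => ?_⟩
  by_cases hp : i ∈ p <;> simpa [hp, hgh i] using hfg i

/-- Springer's theorem for `A[X]`: `φ₀ ⊥ X φ₁` is anisotropic if `φ₀` and `φ₁` are. -/
theorem DiagAnisotropicOn.ite_X_mul_C (hc₀ : DiagAnisotropicOn c (s \ p))
    (hc₁ : DiagAnisotropicOn c (s ∩ p)) :
    DiagAnisotropicOn (fun i => (if i ∈ p then X else 1) * C (c i)) s := by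
  suffices h : ∀ k, ∀ f : ι → A[X], Function.support f ⊆ s →
      ∑ i, (if i ∈ p then X else 1) * C (c i) * f i ^ 2 = 0 → ∀ i, (f i).coeff k = 0 by
    intro f hf hiso
    funext i
    exact Polynomial.ext fun k => h k f hf hiso i
  intro k
  induction k with
  | zero =>
    intro f hf hiso i
    obtain ⟨h, -, -, hfh⟩ := exists_isotropic_X_mul hc₀ hc₁ hf hiso
    rw [hfh i, coeff_X_mul_zero]
  | succ k ih =>
    intro f hf hiso i
    obtain ⟨h, hh, hhiso, hfh⟩ := exists_isotropic_X_mul hc₀ hc₁ hf hiso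
    rw [hfh i, coeff_X_mul]
    exact ih h hh hhiso i

end Springer

theorem DiagAnisotropicOn.of_fibers {ι κ A : Type*} [CommRing A] [Fintype ι]
    {c : ι → A} {s t : Set ι} {sub : ι → κ} (h : ∀ S, DiagAnisotropicOn c (s ∩ {i | sub i = S}))
    (hts : t ⊆ s) (hsub : ∀ i ∈ t, ∀ j ∈ t, sub i = sub j) : DiagAnisotropicOn c t := by
  rcases t.eq_empty_or_nonempty with rfl | ⟨i₀, hi₀⟩
  · intro x hx _
    funext i
    by_contra hxi
    exact hx hxi
  · exact (h (sub i₀)).mono fun i hi => ⟨hts hi, hsub i hi i₀ hi₀⟩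

theorem Fin.finset_eq_of_filter_succ_eq {t : ℕ} {S T : Finset (Fin (t + 1))}
    (h₀ : 0 ∈ S ↔ 0 ∈ T)
    (hsucc : Finset.univ.filter (fun j : Fin t => j.succ ∈ S) =
      Finset.univ.filter (fun j : Fin t => j.succ ∈ T)) : S = T := by
  ext j
  induction j using Fin.cases with
  | zero => exact h₀
  | succ j => simpa using congrArg (j ∈ ·) hsucc

namespace MvPolynomial

variable {R ι : Type*} [CommRing R] [Fintype ι]

theorem finSuccEquiv_prod_X {t : ℕ} (S : Finset (Fin (t + 1))) :
    finSuccEquiv R t (∏ j ∈ S, X j) =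
      (if 0 ∈ S then Polynomial.X else 1) *
        Polynomial.C (∏ j ∈ Finset.univ.filter (fun j : Fin t => j.succ ∈ S), X j) := by
  rw [← Fintype.prod_ite_mem, Fin.prod_univ_succ, Finset.prod_filter, map_prod, map_mul, map_prod]
  congr 1
  · split_ifs <;> simp [finSuccEquiv_X_zero]
  · refine Finset.prod_congr rfl fun j _ => ?_
    split_ifs <;> simp [finSuccEquiv_X_succ]

theorem diagAnisotropicOn_C_mul_prod_X {t : ℕ} {c : ι → R} {sub : ι → Finset (Fin t)}
    {s : Set ι} (h : ∀ S, DiagAnisotropicOn c (s ∩ {i | sub i = S})) :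
    DiagAnisotropicOn (fun i => C (c i) * ∏ j ∈ sub i, X j) s := by
  induction t generalizing s with
  | zero =>
    let e := isEmptyAlgEquiv R (Fin 0)
    refine DiagAnisotropicOn.of_map (f := e) e.injective ?_
    have hc : (fun i => e (C (c i) * ∏ j ∈ sub i, X j)) = c := by
      funext i
      rw [Finset.eq_empty_of_isEmpty (sub i), Finset.prod_empty, mul_one]
      exact e.commutes (c i)
    rw [hc]
    exact (h ∅).mono fun i hi => ⟨hi, Finset.eq_empty_of_isEmpty _⟩
  | succ t ih =>
    let e := finSuccEquiv R t
    let tail : Finset (Fin (t + 1)) → Finset (Fin t) := fun S =>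
      Finset.univ.filter (fun j : Fin t => j.succ ∈ S)
    let p : Set ι := {i | 0 ∈ sub i}
    refine DiagAnisotropicOn.of_map (f := e) e.injective ?_
    have hc : (fun i => e (C (c i) * ∏ j ∈ sub i, X j)) =
        fun i => (if i ∈ p then Polynomial.X else 1) *
          Polynomial.C (C (c i) * ∏ j ∈ tail (sub i), X j) := by
      funext i
      have hC : e (C (c i)) = Polynomial.C (C (c i)) := by simp [e, finSuccEquiv_apply]
      rw [map_mul, finSuccEquiv_prod_X, hC, Polynomial.C_mul]
      simp only [p, tail, Set.mem_ofPred_eq]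
      ring
    rw [hc]
    refine DiagAnisotropicOn.ite_X_mul_C (ih fun S => ?_) (ih fun S => ?_)
    · refine DiagAnisotropicOn.of_fibers h (fun i hi => hi.1.1) fun i hi j hj => ?_
      exact Fin.finset_eq_of_filter_succ_eq (iff_of_false hi.1.2 hj.1.2) (hi.2.trans hj.2.symm)
    · refine DiagAnisotropicOn.of_fibers h (fun i hi => hi.1.1) fun i hi j hj => ?_
      exact Fin.finset_eq_of_filter_succ_eq (iff_of_true hi.1.2 hj.1.2) (hi.2.trans hj.2.symm)

end MvPolynomial

theorem DiagAnisotropicOn.map_isFractionRing {A K ι : Type*} [CommRing A] [CommRing K]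
    [Algebra A K] [IsFractionRing A K] [Fintype ι] {c : ι → A} {s : Set ι}
    (h : DiagAnisotropicOn c s) :
    DiagAnisotropicOn (fun i => algebraMap A K (c i)) s := by
  intro x hx hsum
  obtain ⟨d, hd⟩ := IsLocalization.exist_integer_multiples (nonZeroDivisors A) Finset.univ x
  choose y hy using fun i => hd i (Finset.mem_univ i)
  have hinj := IsFractionRing.injective A K
  have hd_unit : IsUnit (algebraMap A K d) := IsLocalization.map_units K d
  have hy' : ∀ i, algebraMap A K (y i) = algebraMap A K d * x i := fun i => by
    rw [hy i, Algebra.smul_def]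
  have hy0 : y = 0 := by
    refine h y (fun i hi => hx fun hxi => hi (hinj ?_)) (hinj ?_)
    · rw [hy', hxi, mul_zero, map_zero]
    · calc algebraMap A K (∑ i, c i * y i ^ 2)
          = algebraMap A K d ^ 2 * ∑ i, algebraMap A K (c i) * x i ^ 2 := by
            simp only [map_sum, map_mul, map_pow, hy', Finset.mul_sum]
            exact Finset.sum_congr rfl fun i _ => by ring
        _ = algebraMap A K 0 := by rw [hsum, mul_zero, map_zero]
  funext i
  simpa [hy0, hd_unit.mul_right_eq_zero] using (hy' i).symm

theorem eq_zero_of_sum_sq_eq_zero {K ι : Type*} [CommRing K] [Fintype ι]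
    (hreal : ∀ (m : ℕ) (x : Fin m → K), ∑ i, x i ^ 2 = 0 → x = 0) {x : ι → K}
    (hx : ∑ i, x i ^ 2 = 0) : x = 0 := by
  let e := Fintype.equivFin ι
  have h := hreal _ (fun j => x (e.symm j)) (by rwa [e.symm.sum_comp (fun i => x i ^ 2)])
  funext i
  simpa using congrFun h (e i)

theorem diagAnisotropicOn_of_const {K ι : Type*} [CommRing K] [NoZeroDivisors K]
    [Fintype ι] (hreal : ∀ (m : ℕ) (x : Fin m → K), ∑ i, x i ^ 2 = 0 → x = 0) {c : ι → K}
    {s : Set ι} {u : K} (hu : u ≠ 0) (hc : ∀ i ∈ s, c i = u) : DiagAnisotropicOn c s := by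
  intro x hx hsum
  refine eq_zero_of_sum_sq_eq_zero hreal ((mul_eq_zero.mp ?_).resolve_left hu)
  rw [Finset.mul_sum, ← hsum]
  refine Finset.sum_congr rfl fun i _ => ?_
  by_cases hi : i ∈ s
  · rw [hc i hi]
  · rw [Function.notMem_support.mp (mt (@hx i) hi)]
    ring

theorem nTP_and_one_perp_nTP_anisotropic_general (K₀ : Type) [Field K₀]
    (hreal : ∀ (m : ℕ) (x : Fin m → K₀), ∑ i, x i ^ 2 = 0 → x = 0)
    (t : ℕ) (n : ℕ) :
    (∀ y : Fin n → {S : Finset (Fin t) // S.Nonempty} →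
        FractionRing (MvPolynomial (Fin t) K₀),
      ∑ m, ∑ S, pureTraceCoeff K₀ t S * y m S ^ 2 = 0 → y = 0) ∧
    (∀ (x : FractionRing (MvPolynomial (Fin t) K₀))
        (y : Fin n → {S : Finset (Fin t) // S.Nonempty} →
          FractionRing (MvPolynomial (Fin t) K₀)),
      x ^ 2 + ∑ m, ∑ S, pureTraceCoeff K₀ t S * y m S ^ 2 = 0 → x = 0 ∧ y = 0) := by
  -- The index `none` is the summand `<1>`: `sub none = ∅` and `sign ∅ = 1`.
  let sub : Option (Fin n × {S : Finset (Fin t) // S.Nonempty}) → Finset (Fin t) :=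
    fun i => i.elim ∅ fun mS => mS.2.1
  let sign : Finset (Fin t) → K₀ := fun S => if S.Nonempty then (-1) ^ (S.card + 1) else 1
  have hform : DiagAnisotropicOn (fun i => algebraMap (MvPolynomial (Fin t) K₀)
      (FractionRing (MvPolynomial (Fin t) K₀))
      (MvPolynomial.C (sign (sub i)) * ∏ j ∈ sub i, MvPolynomial.X j)) Set.univ := by
    refine DiagAnisotropicOn.map_isFractionRing
      (MvPolynomial.diagAnisotropicOn_C_mul_prod_X fun S => ?_)
    refine diagAnisotropicOn_of_const hreal (u := sign S) ?_ fun i hi => congrArg sign hi.2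
    by_cases hS : S.Nonempty <;> simp [sign, hS]
  have hpure : ∀ S : {S : Finset (Fin t) // S.Nonempty}, algebraMap (MvPolynomial (Fin t) K₀)
      (FractionRing (MvPolynomial (Fin t) K₀))
      (MvPolynomial.C (sign S.1) * ∏ j ∈ S.1, MvPolynomial.X j) = pureTraceCoeff K₀ t S := by
    intro S
    simp [sign, S.2, pureTraceCoeff, xi]
  refine (fun hone_perp => ⟨fun y hy => (hone_perp 0 y (by simpa using hy)).2, hone_perp⟩) ?_
  intro x y h
  have hz := hform (fun i => i.elim x fun mS => y mS.1 mS.2) (Set.subset_univ _) (by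
    rw [Fintype.sum_option, Fintype.sum_prod_type]
    simp only [sub, Option.elim, hpure]
    simpa [sign] using h)
  exact ⟨congrFun hz none, funext fun m => funext fun S => congrFun hz (some (m, S))⟩

/-- For `K₀` formally real, `t ≥ 2` and every positive integer `n`, both
`n × T_P` and `<1> ⊥ n × T_P` are anisotropic over `K = K₀(X₁, …, X_t)`. -/
theorem nTP_and_one_perp_nTP_anisotropic (K₀ : Type) [Field K₀]
    (hreal : ∀ (m : ℕ) (x : Fin m → K₀), ∑ i, x i ^ 2 = 0 → x = 0)
    (t : ℕ) (ht : 2 ≤ t) (n : ℕ) (hn : 1 ≤ n) :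
    (∀ y : Fin n → {S : Finset (Fin t) // S.Nonempty} →
        FractionRing (MvPolynomial (Fin t) K₀),
      ∑ m, ∑ S, pureTraceCoeff K₀ t S * y m S ^ 2 = 0 → y = 0) ∧
    (∀ (x : FractionRing (MvPolynomial (Fin t) K₀))
        (y : Fin n → {S : Finset (Fin t) // S.Nonempty} →
          FractionRing (MvPolynomial (Fin t) K₀)),
      x ^ 2 + ∑ m, ∑ S, pureTraceCoeff K₀ t S * y m S ^ 2 = 0 → x = 0 ∧ y = 0) :=
  nTP_and_one_perp_nTP_anisotropic_general K₀ hreal t n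
end
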